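/- (Solution 4) In the simplified three-player full-street Kuhn poker game with pot size (3+√97)/4 ≤ P ≤ 7/2, every strategy profile with a₁ = b₁ = 0, a₂ = (5−P)/2, b₂ = (5−P)/(P+1), b₃ = 4(P−2)/(3(P+1)), c₁ = 1, d₂ = 0, c₃ = 0, d₁ = (2P−4)/(P+1) and (2P−4)/(P+1) ≤ c₂ + d₃ ≤ (P+7)/(3(P+1)) is an equilibrium. -/

import Mathlib

/-- A strategy profile for simplified three-player full-street Kuhn poker:
eleven betting/calling frequencies. -/
structure Profile where
  a1 : ℝ
  b1 : ℝ
  c1 : ℝ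
  d1 : ℝ
  a2 : ℝ
  b2 : ℝ
  c2 : ℝ
  d2 : ℝ
  b3 : ℝ
  c3 : ℝ
  d3 : ℝ

/-- All eleven frequencies lie in [0,1]. -/
def Profile.valid (s : Profile) : Prop :=
  s.a1 ∈ Set.Icc (0:ℝ) 1 ∧ s.b1 ∈ Set.Icc (0:ℝ) 1 ∧ s.c1 ∈ Set.Icc (0:ℝ) 1 ∧
  s.d1 ∈ Set.Icc (0:ℝ) 1 ∧ s.a2 ∈ Set.Icc (0:ℝ) 1 ∧ s.b2 ∈ Set.Icc (0:ℝ) 1 ∧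
  s.c2 ∈ Set.Icc (0:ℝ) 1 ∧ s.d2 ∈ Set.Icc (0:ℝ) 1 ∧ s.b3 ∈ Set.Icc (0:ℝ) 1 ∧
  s.c3 ∈ Set.Icc (0:ℝ) 1 ∧ s.d3 ∈ Set.Icc (0:ℝ) 1

/-- Player 1's expected profit (so that 24 E₁ equals the stated polynomial). -/
noncomputable def E1 (P : ℝ) (s : Profile) : ℝ :=
  (1 / 24) *
    ((-2 * s.b2 + 2 * s.c2 - 2 * s.b3 + 2 * s.d3 - s.b2 * s.c3) * s.a1
      + (2 * P - 4 - (P + 1) * (s.c2 + s.d3)) * s.b1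
      + (s.b2 - 2 + (P + s.a2) * s.b3) * s.c1
      + ((P + 1) * s.b2 - 2 * s.a2) * s.d1
      + (2 - P) * s.b3 + (2 + s.c3 - P) * s.b2)

/-- Player 2's expected profit (so that 24 E₂ equals the stated polynomial). -/
noncomputable def E2 (P : ℝ) (s : Profile) : ℝ :=
  (1 / 24) *
    ((2 * s.d1 + 2 * s.c3 - 2 * s.b3 - s.c1 * s.b3 - s.b1 * s.c3) * s.a2
      + (2 * P - 4 + 2 * s.a1 - (P + 1) * (s.c3 + s.d1)) * s.b2
      + (P * s.b1 - 2 * s.a1) * s.c2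
      + ((P + 1) * s.b3 - 2 + s.b1) * s.d2
      + (2 - P + s.c1) * s.b3 + (2 - P) * s.b1)

/-- Player 3's expected profit (so that 24 E₃ equals the stated polynomial). -/
noncomputable def E3 (P : ℝ) (s : Profile) : ℝ :=
  (1 / 24) *
    ((2 * P - 4 + 2 * s.a1 + 2 * s.a2 - (P + 1) * (s.c1 + s.d2)) * s.b3
      + ((P + s.a1) * s.b2 - (2 - s.b1) * s.a2) * s.c3
      + ((P + 1) * s.b1 - 2 * s.a1) * s.d3
      + (2 - P - s.c1) * s.b2 + 2 * s.c1
      + (2 - P + s.c2 - s.d2) * s.b1 + 2 * s.d2)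

/-- A profile is an equilibrium if no player can increase her own expected
profit by unilaterally changing her own frequencies within [0,1]. -/
def IsEquilibrium (P : ℝ) (s : Profile) : Prop :=
  (∀ a b c d : ℝ, a ∈ Set.Icc (0:ℝ) 1 → b ∈ Set.Icc (0:ℝ) 1 →
      c ∈ Set.Icc (0:ℝ) 1 → d ∈ Set.Icc (0:ℝ) 1 →
      E1 P { s with a1 := a, b1 := b, c1 := c, d1 := d } ≤ E1 P s) ∧
  (∀ a b c d : ℝ, a ∈ Set.Icc (0:ℝ) 1 → b ∈ Set.Icc (0:ℝ) 1 →
      c ∈ Set.Icc (0:ℝ) 1 → d ∈ Set.Icc (0:ℝ) 1 →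
      E2 P { s with a2 := a, b2 := b, c2 := c, d2 := d } ≤ E2 P s) ∧
  (∀ b c d : ℝ, b ∈ Set.Icc (0:ℝ) 1 → c ∈ Set.Icc (0:ℝ) 1 →
      d ∈ Set.Icc (0:ℝ) 1 →
      E3 P { s with b3 := b, c3 := c, d3 := d } ≤ E3 P s)

/-! Each expected profit is affine in the player's own frequencies. At this profile every own
frequency of every player either has zero slope (the player is indifferent) or sits at the
endpoint of `[0,1]` favoured by the sign of its slope; only Player 1's slope in `c₁`, which is
`(2P² - 3P - 11) / (3(P + 1))`, needs the lower bound on the pot, whose larger root is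
`(3 + √97) / 4`. -/

open Set

theorem isMaxOn_const_mul_of_eq_zero {k : ℝ} {t : Set ℝ} (hk : k = 0) (x : ℝ) :
    IsMaxOn (k * ·) t x :=
  fun y _ => by simp [hk]

theorem isMaxOn_const_mul_zero {k : ℝ} (hk : k ≤ 0) : IsMaxOn (k * ·) (Icc 0 1) 0 :=
  fun y hy => by simpa using mul_nonpos_of_nonpos_of_nonneg hk hy.1

theorem isMaxOn_const_mul_one {k : ℝ} (hk : 0 ≤ k) : IsMaxOn (k * ·) (Icc 0 1) 1 :=
  fun y hy => by simpa using mul_le_of_le_one_right hk hy.2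

theorem IsMaxOn.const_mul_sub_nonpos {k x y : ℝ} {t : Set ℝ} (h : IsMaxOn (k * ·) t x)
    (hy : y ∈ t) : k * (y - x) ≤ 0 := by
  linarith [isMaxOn_iff.mp h y hy]

section Slopes

variable (P : ℝ) (s : Profile)

def slopeA1 : ℝ := -2 * s.b2 + 2 * s.c2 - 2 * s.b3 + 2 * s.d3 - s.b2 * s.c3
def slopeB1 : ℝ := 2 * P - 4 - (P + 1) * (s.c2 + s.d3)
def slopeC1 : ℝ := s.b2 - 2 + (P + s.a2) * s.b3
def slopeD1 : ℝ := (P + 1) * s.b2 - 2 * s.a2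

def slopeA2 : ℝ := 2 * s.d1 + 2 * s.c3 - 2 * s.b3 - s.c1 * s.b3 - s.b1 * s.c3
def slopeB2 : ℝ := 2 * P - 4 + 2 * s.a1 - (P + 1) * (s.c3 + s.d1)
def slopeC2 : ℝ := P * s.b1 - 2 * s.a1
def slopeD2 : ℝ := (P + 1) * s.b3 - 2 + s.b1

def slopeB3 : ℝ := 2 * P - 4 + 2 * s.a1 + 2 * s.a2 - (P + 1) * (s.c1 + s.d2)
def slopeC3 : ℝ := (P + s.a1) * s.b2 - (2 - s.b1) * s.a2
def slopeD3 : ℝ := (P + 1) * s.b1 - 2 * s.a1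

theorem E1_update_sub (a b c d : ℝ) :
    E1 P { s with a1 := a, b1 := b, c1 := c, d1 := d } - E1 P s =
      (slopeA1 s * (a - s.a1) + slopeB1 P s * (b - s.b1) + slopeC1 P s * (c - s.c1)
        + slopeD1 P s * (d - s.d1)) / 24 := by
  simp only [E1, slopeA1, slopeB1, slopeC1, slopeD1]
  ring

theorem E2_update_sub (a b c d : ℝ) :
    E2 P { s with a2 := a, b2 := b, c2 := c, d2 := d } - E2 P s =
      (slopeA2 s * (a - s.a2) + slopeB2 P s * (b - s.b2) + slopeC2 P s * (c - s.c2)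
        + slopeD2 P s * (d - s.d2)) / 24 := by
  simp only [E2, slopeA2, slopeB2, slopeC2, slopeD2]
  ring

theorem E3_update_sub (b c d : ℝ) :
    E3 P { s with b3 := b, c3 := c, d3 := d } - E3 P s =
      (slopeB3 P s * (b - s.b3) + slopeC3 P s * (c - s.c3) + slopeD3 P s * (d - s.d3)) / 24 := by
  simp only [E3, slopeB3, slopeC3, slopeD3]
  ring

variable {P s}

theorem E1_update_le (ha : IsMaxOn (slopeA1 s * ·) (Icc 0 1) s.a1)
    (hb : IsMaxOn (slopeB1 P s * ·) (Icc 0 1) s.b1)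
    (hc : IsMaxOn (slopeC1 P s * ·) (Icc 0 1) s.c1)
    (hd : IsMaxOn (slopeD1 P s * ·) (Icc 0 1) s.d1)
    {a b c d : ℝ} (ha' : a ∈ Icc (0 : ℝ) 1) (hb' : b ∈ Icc (0 : ℝ) 1)
    (hc' : c ∈ Icc (0 : ℝ) 1) (hd' : d ∈ Icc (0 : ℝ) 1) :
    E1 P { s with a1 := a, b1 := b, c1 := c, d1 := d } ≤ E1 P s := by
  have := E1_update_sub P s a b c d
  linarith [ha.const_mul_sub_nonpos ha', hb.const_mul_sub_nonpos hb',
    hc.const_mul_sub_nonpos hc', hd.const_mul_sub_nonpos hd']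

theorem E2_update_le (ha : IsMaxOn (slopeA2 s * ·) (Icc 0 1) s.a2)
    (hb : IsMaxOn (slopeB2 P s * ·) (Icc 0 1) s.b2)
    (hc : IsMaxOn (slopeC2 P s * ·) (Icc 0 1) s.c2)
    (hd : IsMaxOn (slopeD2 P s * ·) (Icc 0 1) s.d2)
    {a b c d : ℝ} (ha' : a ∈ Icc (0 : ℝ) 1) (hb' : b ∈ Icc (0 : ℝ) 1)
    (hc' : c ∈ Icc (0 : ℝ) 1) (hd' : d ∈ Icc (0 : ℝ) 1) :
    E2 P { s with a2 := a, b2 := b, c2 := c, d2 := d } ≤ E2 P s := by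
  have := E2_update_sub P s a b c d
  linarith [ha.const_mul_sub_nonpos ha', hb.const_mul_sub_nonpos hb',
    hc.const_mul_sub_nonpos hc', hd.const_mul_sub_nonpos hd']

theorem E3_update_le (hb : IsMaxOn (slopeB3 P s * ·) (Icc 0 1) s.b3)
    (hc : IsMaxOn (slopeC3 P s * ·) (Icc 0 1) s.c3)
    (hd : IsMaxOn (slopeD3 P s * ·) (Icc 0 1) s.d3)
    {b c d : ℝ} (hb' : b ∈ Icc (0 : ℝ) 1) (hc' : c ∈ Icc (0 : ℝ) 1) (hd' : d ∈ Icc (0 : ℝ) 1) :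
    E3 P { s with b3 := b, c3 := c, d3 := d } ≤ E3 P s := by
  have := E3_update_sub P s b c d
  linarith [hb.const_mul_sub_nonpos hb', hc.const_mul_sub_nonpos hc',
    hd.const_mul_sub_nonpos hd']

end Slopes

structure IsSolution4 (P : ℝ) (s : Profile) : Prop where
  pot_ge : (3 + Real.sqrt 97) / 4 ≤ P
  pot_le : P ≤ 7 / 2
  a1_eq : s.a1 = 0
  b1_eq : s.b1 = 0
  a2_eq : s.a2 = (5 - P) / 2
  b2_eq : s.b2 = (5 - P) / (P + 1)
  b3_eq : s.b3 = 4 * (P - 2) / (3 * (P + 1))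
  c1_eq : s.c1 = 1
  d2_eq : s.d2 = 0
  c3_eq : s.c3 = 0
  d1_eq : s.d1 = (2 * P - 4) / (P + 1)
  c2_add_d3_ge : (2 * P - 4) / (P + 1) ≤ s.c2 + s.d3
  c2_add_d3_le : s.c2 + s.d3 ≤ (P + 7) / (3 * (P + 1))

namespace IsSolution4

variable {P : ℝ} {s : Profile}

theorem two_mul_sq_sub_three_mul_sub_eleven_nonneg (h : IsSolution4 P s) :
    0 ≤ 2 * P ^ 2 - 3 * P - 11 := by
  obtain ⟨-, h97⟩ := Real.sqrt_le_iff.mp (show √97 ≤ 4 * P - 3 by linarith [h.pot_ge])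
  linarith

theorem pot_ge_three (h : IsSolution4 P s) : 3 ≤ P := by
  have : (9 : ℝ) ≤ √97 := Real.le_sqrt_of_sq_le (by norm_num)
  linarith [h.pot_ge]

theorem slopeA1_nonpos (h : IsSolution4 P s) : slopeA1 s ≤ 0 := by
  have hP := h.pot_ge_three
  have : s.b2 + s.b3 = (P + 7) / (3 * (P + 1)) := by
    rw [h.b2_eq, h.b3_eq]
    field_simp
    ring
  simp only [slopeA1, h.c3_eq]
  linarith [h.c2_add_d3_le]

theorem slopeB1_nonpos (h : IsSolution4 P s) : slopeB1 P s ≤ 0 := by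
  have := h.c2_add_d3_ge
  rw [div_le_iff₀ (by linarith [h.pot_ge_three])] at this
  simp only [slopeB1]
  linarith

theorem slopeC1_nonneg (h : IsSolution4 P s) : 0 ≤ slopeC1 P s := by
  have hP := h.pot_ge_three
  have : slopeC1 P s = (2 * P ^ 2 - 3 * P - 11) / (3 * (P + 1)) := by
    simp only [slopeC1, h.b2_eq, h.a2_eq, h.b3_eq]
    field_simp
    ring
  rw [this]
  exact div_nonneg h.two_mul_sq_sub_three_mul_sub_eleven_nonneg (by linarith)

theorem slopeD1_eq_zero (h : IsSolution4 P s) : slopeD1 P s = 0 := by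
  have hP := h.pot_ge_three
  simp only [slopeD1, h.b2_eq, h.a2_eq]
  field_simp
  ring

theorem slopeA2_eq_zero (h : IsSolution4 P s) : slopeA2 s = 0 := by
  have hP := h.pot_ge_three
  simp only [slopeA2, h.d1_eq, h.c3_eq, h.b3_eq, h.c1_eq, h.b1_eq]
  field_simp
  ring

theorem slopeB2_eq_zero (h : IsSolution4 P s) : slopeB2 P s = 0 := by
  have hP := h.pot_ge_three
  simp only [slopeB2, h.a1_eq, h.c3_eq, h.d1_eq]
  field_simp
  ring

theorem slopeC2_eq_zero (h : IsSolution4 P s) : slopeC2 P s = 0 := by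
  simp [slopeC2, h.a1_eq, h.b1_eq]

theorem slopeD2_nonpos (h : IsSolution4 P s) : slopeD2 P s ≤ 0 := by
  have hP := h.pot_ge_three
  have : (P + 1) * s.b3 = 4 * (P - 2) / 3 := by
    rw [h.b3_eq]
    field_simp
  simp only [slopeD2, this, h.b1_eq]
  linarith [h.pot_le]

theorem slopeB3_eq_zero (h : IsSolution4 P s) : slopeB3 P s = 0 := by
  simp only [slopeB3, h.a1_eq, h.a2_eq, h.c1_eq, h.d2_eq]
  ring

theorem slopeC3_nonpos (h : IsSolution4 P s) : slopeC3 P s ≤ 0 := by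
  have hP := h.pot_ge_three
  have : slopeC3 P s = -((5 - P) / (P + 1)) := by
    simp only [slopeC3, h.a1_eq, h.b2_eq, h.b1_eq, h.a2_eq]
    field_simp
    ring
  rw [this, neg_nonpos]
  exact div_nonneg (by linarith [h.pot_le]) (by linarith)

theorem slopeD3_eq_zero (h : IsSolution4 P s) : slopeD3 P s = 0 := by
  simp [slopeD3, h.a1_eq, h.b1_eq]

end IsSolution4

theorem solution_4_is_equilibrium_general (P : ℝ) (s : Profile)
    (hPl : (3 + Real.sqrt 97) / 4 ≤ P) (hPu : P ≤ 7 / 2)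
    (ha1 : s.a1 = 0) (hb1 : s.b1 = 0)
    (ha2 : s.a2 = (5 - P) / 2) (hb2 : s.b2 = (5 - P) / (P + 1))
    (hb3 : s.b3 = 4 * (P - 2) / (3 * (P + 1)))
    (hc1 : s.c1 = 1) (hd2 : s.d2 = 0) (hc3 : s.c3 = 0)
    (hd1 : s.d1 = (2 * P - 4) / (P + 1))
    (h23l : (2 * P - 4) / (P + 1) ≤ s.c2 + s.d3)
    (h23u : s.c2 + s.d3 ≤ (P + 7) / (3 * (P + 1))) :
    IsEquilibrium P s := by
  have h : IsSolution4 P s := ⟨hPl, hPu, ha1, hb1, ha2, hb2, hb3, hc1, hd2, hc3, hd1, h23l, h23u⟩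
  refine ⟨fun _ _ _ _ => E1_update_le ?_ ?_ ?_ ?_, fun _ _ _ _ => E2_update_le ?_ ?_ ?_ ?_,
    fun _ _ _ => E3_update_le ?_ ?_ ?_⟩
  · exact ha1 ▸ isMaxOn_const_mul_zero h.slopeA1_nonpos
  · exact hb1 ▸ isMaxOn_const_mul_zero h.slopeB1_nonpos
  · exact hc1 ▸ isMaxOn_const_mul_one h.slopeC1_nonneg
  · exact isMaxOn_const_mul_of_eq_zero h.slopeD1_eq_zero _
  · exact isMaxOn_const_mul_of_eq_zero h.slopeA2_eq_zero _
  · exact isMaxOn_const_mul_of_eq_zero h.slopeB2_eq_zero _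
  · exact isMaxOn_const_mul_of_eq_zero h.slopeC2_eq_zero _
  · exact hd2 ▸ isMaxOn_const_mul_zero h.slopeD2_nonpos
  · exact isMaxOn_const_mul_of_eq_zero h.slopeB3_eq_zero _
  · exact hc3 ▸ isMaxOn_const_mul_zero h.slopeC3_nonpos
  · exact isMaxOn_const_mul_of_eq_zero h.slopeD3_eq_zero _

theorem solution_4_is_equilibrium (P : ℝ) (s : Profile)
    (hPl : (3 + Real.sqrt 97) / 4 ≤ P) (hPu : P ≤ 7 / 2) (hval : s.valid)
    (ha1 : s.a1 = 0) (hb1 : s.b1 = 0)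
    (ha2 : s.a2 = (5 - P) / 2) (hb2 : s.b2 = (5 - P) / (P + 1))
    (hb3 : s.b3 = 4 * (P - 2) / (3 * (P + 1)))
    (hc1 : s.c1 = 1) (hd2 : s.d2 = 0) (hc3 : s.c3 = 0)
    (hd1 : s.d1 = (2 * P - 4) / (P + 1))
    (h23l : (2 * P - 4) / (P + 1) ≤ s.c2 + s.d3)
    (h23u : s.c2 + s.d3 ≤ (P + 7) / (3 * (P + 1))) :
    IsEquilibrium P s :=
  solution_4_is_equilibrium_general P s hPl hPu ha1 hb1 ha2 hb2 hb3 hc1 hd2 hc3 hd1 h23l h23u
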